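/- Let A be an integral domain with field of fractions 𝕂, let M be a submodule of A⟦x₁,…,xₙ⟧ᵖ, let (α_i,j_i), i = 1,…,q, be the vertices of the diagram of initial exponents 𝒩(M), and choose representatives Φ_i ∈ M with exp Φ_i = (α_i,j_i). Let S be the multiplicative subset of A generated by the initial coefficients Φ_{i,(α_i,j_i)}, let B be a subring of 𝕂 containing S⁻¹A, and let Δ₁,…,Δ_q,Δ be the partition of ℕⁿ×{1,…,p} determined by the (α_i,j_i) as in Hironaka's division algorithm. Then: (a) 𝒩(M) = Δ₁ ∪ ⋯ ∪ Δ_q; (b) Φ₁,…,Φ_q generate the B⟦x⟧-module B⟦x⟧·M; (c) for G ∈ B⟦x⟧ᵖ, one has G ∈ B⟦x⟧·M if and only if the remainder R(G) of the division of G by Φ₁,…,Φ_q is zero. -/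

import Mathlib

/-!
Multiplying by monomials shows `𝒩(M) + ℕⁿ = 𝒩(M)`, and every point of `𝒩(M)` lies above a minimal
point of its fibre, which is a vertex; hence (a). If `H = Σ cₖ mₖ` with `cₖ ∈ 𝕂⟦x⟧` and `mₖ ∈ M`,
clearing the denominators of the finitely many coefficients of the `cₖ` of degree at most
`|exp H|` yields an element of `M` with the same initial exponent as `H`, so `exp H ∈ 𝒩(M)`.
Consequently a remainder supported in `Δ` that lies in `B⟦x⟧·M` vanishes, which is (c).
Hironaka's division, computed coefficient by coefficient along the well-order, only divides by
the initial coefficients of the `Φᵢ`, so it keeps the quotients in `B⟦x⟧`; dividing an element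
of `B⟦x⟧·M` and applying (c) gives (b).
-/

open Classical

/-- Index set `ℕⁿ × {1,…,p}` for coefficients of elements of `A⟦x₁,…,xₙ⟧ᵖ`. -/
abbrev Idx (n p : ℕ) := (Fin n →₀ ℕ) × Fin p

/-- Total degree `|α|` of a multiindex. -/
def degF {n : ℕ} (α : Fin n →₀ ℕ) : ℕ := ∑ i, α i

/-- Lexicographic order on multiindices. -/
def lexLT {n : ℕ} (α β : Fin n →₀ ℕ) : Prop :=
  ∃ i : Fin n, (∀ j, j < i → α j = β j) ∧ α i < β i

/-- The total order on `ℕⁿ × {1,…,p}` comparing `(|α|, j, α)` lexicographically. -/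
def idxLT {n p : ℕ} (a b : Idx n p) : Prop :=
  degF a.1 < degF b.1 ∨
    (degF a.1 = degF b.1 ∧ ((a.2 : ℕ) < (b.2 : ℕ) ∨ (a.2 = b.2 ∧ lexLT a.1 b.1)))

def idxLE {n p : ℕ} (a b : Idx n p) : Prop := idxLT a b ∨ a = b

/-- Support of `F ∈ A⟦x⟧ᵖ`. -/
def suppV {n p : ℕ} {A : Type} [Semiring A] (F : Fin p → MvPowerSeries (Fin n) A) :
    Set (Idx n p) :=
  {d | MvPowerSeries.coeff d.1 (F d.2) ≠ 0}

/-- `d` is the initial exponent `exp F` of `F`. -/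
def IsExpOf {n p : ℕ} {A : Type} [Semiring A] (F : Fin p → MvPowerSeries (Fin n) A)
    (d : Idx n p) : Prop :=
  d ∈ suppV F ∧ ∀ d' ∈ suppV F, idxLE d d'

/-- `S + ℕⁿ`, for `S ⊆ ℕⁿ × {1,…,p}`. -/
def setShift {n p : ℕ} (S : Set (Idx n p)) : Set (Idx n p) :=
  {d | ∃ s ∈ S, ∃ β : Fin n →₀ ℕ, d = (s.1 + β, s.2)}

/-- The diagram of initial exponents `𝒩(M) = {exp F : F ∈ M ∖ {0}}` of a submodule `M`
of `A⟦x⟧ᵖ`. -/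
def diagramOf {n p : ℕ} {A : Type} [CommRing A]
    (M : Submodule (MvPowerSeries (Fin n) A) (Fin p → MvPowerSeries (Fin n) A)) :
    Set (Idx n p) :=
  {d | ∃ F ∈ M, F ≠ 0 ∧ IsExpOf F d}

/-- `d` is a vertex of the diagram `𝒩`: `(𝒩 ∖ {d}) + ℕⁿ ≠ 𝒩`. -/
def IsVertex {n p : ℕ} (𝒩 : Set (Idx n p)) (d : Idx n p) : Prop :=
  setShift (𝒩 \ {d}) ≠ 𝒩

/-- `(α_i, j_i) + ℕⁿ`. -/
def DeltaFull {n p q : ℕ} (e : Fin q → Idx n p) (i : Fin q) : Set (Idx n p) :=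
  {d | d.2 = (e i).2 ∧ ∃ β : Fin n →₀ ℕ, d.1 = (e i).1 + β}

/-- The sets `Δ_i` of Hironaka's division: `Δ_i = ((α_i,j_i) + ℕⁿ) ∖ (Δ_1 ∪ ⋯ ∪ Δ_{i−1})`. -/
def Delta {n p q : ℕ} (e : Fin q → Idx n p) (i : Fin q) : Set (Idx n p) :=
  DeltaFull e i \ ⋃ (k : Fin q) (hk : k < i), Delta e k
termination_by i.val
decreasing_by exact hk

/-- The complementary region `Δ = ℕⁿ×{1,…,p} ∖ (Δ_1 ∪ ⋯ ∪ Δ_q)`. -/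
def DeltaC {n p q : ℕ} (e : Fin q → Idx n p) : Set (Idx n p) :=
  (⋃ i : Fin q, Delta e i)ᶜ

/-- Membership in the `B⟦x⟧`-module `B⟦x⟧·M` generated inside `𝕂⟦x⟧ᵖ` by (the image of) a
submodule `M` of `A⟦x⟧ᵖ`, where `B` is a subring of `𝕂`. -/
def MemBxM {n p : ℕ} {A : Type} [CommRing A] [IsDomain A]
    (B : Subring (FractionRing A))
    (M : Submodule (MvPowerSeries (Fin n) A) (Fin p → MvPowerSeries (Fin n) A))
    (G : Fin p → MvPowerSeries (Fin n) (FractionRing A)) : Prop :=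
  ∃ (k : ℕ) (c : Fin k → MvPowerSeries (Fin n) (FractionRing A))
    (m : Fin k → (Fin p → MvPowerSeries (Fin n) A)),
    (∀ i α, MvPowerSeries.coeff α (c i) ∈ B) ∧
    (∀ i, m i ∈ M) ∧
    G = ∑ i, fun j => c i * MvPowerSeries.map (algebraMap A (FractionRing A)) (m i j)

section Order

variable {n p : ℕ}

lemma degF_eq_degree (α : Fin n →₀ ℕ) : degF α = α.degree := (Finsupp.degree_eq_sum α).symm

lemma degF_add (α β : Fin n →₀ ℕ) : degF (α + β) = degF α + degF β := by
  simp only [degF_eq_degree, map_add]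

def idxKey (d : Idx n p) : ℕ ×ₗ (ℕ ×ₗ Lex (Fin n →₀ ℕ)) :=
  toLex (degF d.1, toLex ((d.2 : ℕ), toLex d.1))

lemma idxKey_injective : Function.Injective (idxKey (n := n) (p := p)) := by
  intro a b h
  simp only [idxKey, toLex_inj, Prod.mk.injEq] at h
  exact Prod.ext h.2.2 (Fin.ext h.2.1)

lemma idxLT_iff_idxKey_lt {a b : Idx n p} : idxLT a b ↔ idxKey a < idxKey b := by
  simp only [idxKey, Prod.Lex.lt_iff, idxLT, lexLT, Finsupp.Lex.lt_iff, ofLex_toLex,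
    Fin.val_inj]

lemma idxLE_iff_idxKey_le {a b : Idx n p} : idxLE a b ↔ idxKey a ≤ idxKey b := by
  rw [idxLE, idxLT_iff_idxKey_lt, le_iff_lt_or_eq, idxKey_injective.eq_iff]

lemma idxLT_wf : WellFounded (idxLT (n := n) (p := p)) :=
  (InvImage.wf idxKey wellFounded_lt).mono fun _ _ => idxLT_iff_idxKey_lt.mp

lemma not_idxLT_iff {a b : Idx n p} : ¬ idxLT a b ↔ idxLE b a := by
  rw [idxLT_iff_idxKey_lt, idxLE_iff_idxKey_le, not_lt]

lemma idxLT_add_right {a b : Idx n p} (h : idxLT a b) (β : Fin n →₀ ℕ) :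
    idxLT (a.1 + β, a.2) (b.1 + β, b.2) := by
  rcases h with h | ⟨h1, h2 | ⟨h2, i, hi1, hi2⟩⟩
  · exact Or.inl (by simp only [degF_add]; omega)
  · exact Or.inr ⟨by simp only [degF_add, h1], Or.inl h2⟩
  · exact Or.inr ⟨by simp only [degF_add, h1], Or.inr ⟨h2, i,
      fun j hj => by simp [hi1 j hj], by simp only [Finsupp.add_apply]; omega⟩⟩

lemma idxLE_add_right {a b : Idx n p} (h : idxLE a b) (β : Fin n →₀ ℕ) :
    idxLE (a.1 + β, a.2) (b.1 + β, b.2) := by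
  rcases h with h | rfl
  · exact Or.inl (idxLT_add_right h β)
  · exact Or.inr rfl

lemma degF_le_of_idxLT {a b : Idx n p} (h : idxLT a b) : degF a.1 ≤ degF b.1 := by
  rcases h with h | ⟨h, _⟩ <;> omega

end Order

section InitialExponent

open MvPowerSeries Finset

variable {n p : ℕ} {R : Type} [Semiring R]

lemma exists_isExpOf {F : Fin p → MvPowerSeries (Fin n) R} (hF : F ≠ 0) :
    ∃ d, IsExpOf F d := by
  have hne : (suppV F).Nonempty := by
    by_contra h
    refine hF (funext fun j => ext fun α => ?_)
    by_contra hα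
    exact h ⟨(α, j), hα⟩
  obtain ⟨d, hd, hmin⟩ := idxLT_wf.has_min (suppV F) hne
  exact ⟨d, hd, fun d' hd' => not_idxLT_iff.mp (hmin d' hd')⟩

lemma IsExpOf.ne_zero {F : Fin p → MvPowerSeries (Fin n) R} {d : Idx n p} (hd : IsExpOf F d) :
    F ≠ 0 := by
  rintro rfl
  exact hd.1 (map_zero _)

lemma suppV_map {S : Type} [Semiring S] {f : R →+* S} (hf : Function.Injective f)
    (F : Fin p → MvPowerSeries (Fin n) R) :
    suppV (fun j => map f (F j)) = suppV F := by
  ext d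
  simp only [suppV, Set.mem_ofPred_eq, coeff_map, ne_eq, map_eq_zero_iff f hf]

lemma isExpOf_map_iff {S : Type} [Semiring S] {f : R →+* S} (hf : Function.Injective f)
    {F : Fin p → MvPowerSeries (Fin n) R} {d : Idx n p} :
    IsExpOf (fun j => map f (F j)) d ↔ IsExpOf F d := by
  simp only [IsExpOf, suppV_map hf]

lemma IsExpOf.monomial_mul {F : Fin p → MvPowerSeries (Fin n) R} {d : Idx n p}
    (hd : IsExpOf F d) (β : Fin n →₀ ℕ) :
    IsExpOf (fun j => monomial β 1 * F j) (d.1 + β, d.2) := by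
  refine ⟨by simpa [suppV, coeff_monomial_mul] using hd.1, fun ⟨γ, j⟩ hγ => ?_⟩
  simp only [suppV, Set.mem_ofPred_eq, coeff_monomial_mul, one_mul] at hγ
  split_ifs at hγ with hle
  · obtain ⟨δ, rfl⟩ := le_iff_exists_add.mp hle
    rw [add_tsub_cancel_left] at hγ
    simpa [add_comm β δ] using idxLE_add_right (hd.2 (δ, j) hγ) β
  · exact absurd rfl hγ

lemma IsExpOf.of_coeff_eq_mul [NoZeroDivisors R] {G H : Fin p → MvPowerSeries (Fin n) R}
    {d : Idx n p} (hH : IsExpOf H d) {b : R} (hb : b ≠ 0)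
    (hGH : ∀ d' : Idx n p, degF d'.1 ≤ degF d.1 →
      coeff d'.1 (G d'.2) = b * coeff d'.1 (H d'.2)) :
    IsExpOf G d := by
  refine ⟨?_, fun d' hd' => not_idxLT_iff.mp fun hlt => ?_⟩
  · simpa [suppV, hGH d le_rfl, hb] using hH.1
  · have hd'H : d' ∈ suppV H := by
      simpa [suppV, hGH d' (degF_le_of_idxLT hlt), hb] using hd'
    exact not_idxLT_iff.mpr (hH.2 d' hd'H) hlt

lemma IsExpOf.add_eq_of_not_idxLT {F : Fin p → MvPowerSeries (Fin n) R} {e d : Idx n p}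
    (hF : IsExpOf F e) {x : (Fin n →₀ ℕ) × (Fin n →₀ ℕ)} (hx : x ∈ antidiagonal d.1)
    (hFx : coeff x.2 (F d.2) ≠ 0) (hlt : ¬ idxLT (e.1 + x.1, e.2) d) :
    (e.1 + x.1, e.2) = d := by
  have hd : ((x.2 + x.1, d.2) : Idx n p) = d :=
    Prod.ext (by rw [add_comm]; exact mem_antidiagonal.mp hx) rfl
  have hle := idxLE_add_right (hF.2 (x.2, d.2) hFx) x.1
  rw [hd] at hle
  exact hle.resolve_left hlt

end InitialExponent

section Diagram

variable {n p q : ℕ}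

lemma setShift_diagramOf {A : Type} [CommRing A]
    (M : Submodule (MvPowerSeries (Fin n) A) (Fin p → MvPowerSeries (Fin n) A)) :
    setShift (diagramOf M) = diagramOf M := by
  refine Set.Subset.antisymm ?_ fun d hd => ⟨d, hd, 0, by simp⟩
  rintro _ ⟨d, ⟨F, hFM, -, hFd⟩, β, rfl⟩
  have hβ := hFd.monomial_mul β
  exact ⟨_, M.smul_mem (MvPowerSeries.monomial β 1) hFM, hβ.ne_zero, hβ⟩

lemma mem_of_isVertex {S : Set (Idx n p)} (hS : setShift S = S) {d : Idx n p}
    (hd : IsVertex S d) : d ∈ S := by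
  by_contra hdS
  exact hd (by rwa [Set.sdiff_singleton_eq_self hdS])

lemma exists_isVertex_le {S : Set (Idx n p)} {d : Idx n p} (hd : d ∈ S) :
    ∃ v, IsVertex S v ∧ v.2 = d.2 ∧ v.1 ≤ d.1 := by
  obtain ⟨m, ⟨hmd, hmS⟩, hmin⟩ :=
    wellFounded_lt.has_min {α | α ≤ d.1 ∧ (α, d.2) ∈ S} ⟨d.1, le_rfl, hd⟩
  refine ⟨(m, d.2), fun hshift => ?_, rfl, hmd⟩
  rw [← hshift] at hmS
  obtain ⟨s, ⟨hsS, hsm⟩, β, hs⟩ := hmS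
  obtain ⟨hs1, hs2⟩ : m = s.1 + β ∧ d.2 = s.2 := Prod.ext_iff.mp hs
  have hlt : s.1 < m := lt_of_le_of_ne (hs1 ▸ le_self_add)
    fun h => hsm (Prod.ext h hs2.symm)
  exact hmin s.1 ⟨hlt.le.trans hmd, by rwa [hs2]⟩ hlt

lemma Delta_subset_DeltaFull (e : Fin q → Idx n p) (i : Fin q) :
    Delta e i ⊆ DeltaFull e i := by
  rw [Delta]
  exact Set.sdiff_subset

lemma eq_of_mem_Delta {e : Fin q → Idx n p} {i k : Fin q} {d : Idx n p}
    (hi : d ∈ Delta e i) (hk : d ∈ Delta e k) : i = k := by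
  by_contra hik
  rcases lt_or_gt_of_ne hik with h | h
  · rw [Delta] at hk
    exact hk.2 (Set.mem_biUnion h hi)
  · rw [Delta] at hi
    exact hi.2 (Set.mem_biUnion h hk)

lemma iUnion_Delta (e : Fin q → Idx n p) : ⋃ i, Delta e i = ⋃ i, DeltaFull e i := by
  refine Set.Subset.antisymm (Set.iUnion_mono (Delta_subset_DeltaFull e)) ?_
  intro d hd
  obtain ⟨i, hi⟩ := Set.mem_iUnion.mp hd
  by_cases hlow : d ∈ ⋃ (k : Fin q) (_ : k < i), Delta e k
  · obtain ⟨k, -, hk⟩ := Set.mem_iUnion₂.mp hlow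
    exact Set.mem_iUnion.mpr ⟨k, hk⟩
  · exact Set.mem_iUnion.mpr ⟨i, by rw [Delta]; exact ⟨hi, hlow⟩⟩

lemma eq_iUnion_Delta_of_isVertex_iff {S : Set (Idx n p)} (hS : setShift S = S)
    {e : Fin q → Idx n p} (hevert : ∀ d, IsVertex S d ↔ ∃ i, e i = d) :
    S = ⋃ i, Delta e i := by
  rw [iUnion_Delta]
  refine Set.Subset.antisymm (fun d hd => ?_) (fun d hd => ?_)
  · obtain ⟨v, hv, hv2, hv1⟩ := exists_isVertex_le hd
    obtain ⟨i, rfl⟩ := (hevert v).mp hv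
    obtain ⟨β, hβ⟩ := le_iff_exists_add.mp hv1
    exact Set.mem_iUnion.mpr ⟨i, hv2.symm, β, hβ⟩
  · obtain ⟨i, hdi, β, hβ⟩ := Set.mem_iUnion.mp hd
    rw [← hS]
    exact ⟨e i, mem_of_isVertex hS ((hevert _).mpr ⟨i, rfl⟩), β, Prod.ext hβ hdi⟩

end Diagram

section ClearingDenominators

open MvPowerSeries

variable {n : ℕ}

lemma coeff_mul_eq_of_coeff_eq {R : Type*} [CommSemiring R] {f g : MvPowerSeries (Fin n) R}
    {D : ℕ} (hfg : ∀ β, degF β ≤ D → coeff β f = coeff β g) (h : MvPowerSeries (Fin n) R)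
    {γ : Fin n →₀ ℕ} (hγ : degF γ ≤ D) : coeff γ (f * h) = coeff γ (g * h) := by
  rw [coeff_mul, coeff_mul]
  refine Finset.sum_congr rfl fun x hx => ?_
  have hdeg := degF_add x.1 x.2
  rw [Finset.HasAntidiagonal.mem_antidiagonal.mp hx] at hdeg
  rw [hfg x.1 (by omega)]

lemma exists_coeff_map_eq_mul {A K : Type*} [CommRing A] [CommRing K] [Algebra A K]
    [IsFractionRing A K] {k : ℕ} (c : Fin k → MvPowerSeries (Fin n) K) (D : ℕ) :
    ∃ b ∈ nonZeroDivisors A, ∃ a : Fin k → MvPowerSeries (Fin n) A, ∀ i β, degF β ≤ D →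
      coeff β (map (algebraMap A K) (a i)) = algebraMap A K b * coeff β (c i) := by
  have : Finite {β : Fin n →₀ ℕ | degF β ≤ D} := by
    simpa only [degF_eq_degree] using (Finsupp.finite_of_degree_le D).to_subtype
  obtain ⟨b, hb⟩ := IsLocalization.exist_integer_multiples_of_finite (nonZeroDivisors A)
    fun x : Fin k × {β : Fin n →₀ ℕ | degF β ≤ D} => coeff x.2.1 (c x.1)
  choose a ha using fun x => RingHom.mem_rangeS.mp (hb x)
  let trunc : Fin k → MvPowerSeries (Fin n) A := fun i β =>
    if h : degF β ≤ D then a (i, ⟨β, h⟩) else 0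
  refine ⟨b, b.2, trunc, fun i β hβ => ?_⟩
  rw [coeff_map, coeff_apply, show trunc i β = a (i, ⟨β, hβ⟩) from dif_pos hβ, ha,
    Algebra.smul_def]

lemma mem_diagramOf_of_isExpOf_sum {A K : Type} [CommRing A] [Field K] [Algebra A K]
    [IsFractionRing A K] {p k : ℕ}
    {M : Submodule (MvPowerSeries (Fin n) A) (Fin p → MvPowerSeries (Fin n) A)}
    {c : Fin k → MvPowerSeries (Fin n) K} {m : Fin k → Fin p → MvPowerSeries (Fin n) A}
    (hm : ∀ i, m i ∈ M) {d : Idx n p}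
    (hd : IsExpOf (∑ i, fun j => c i * map (algebraMap A K) (m i j)) d) : d ∈ diagramOf M := by
  obtain ⟨b, hb, a, ha⟩ := exists_coeff_map_eq_mul (A := A) c (degF d.1)
  have hFd : IsExpOf (fun j => map (algebraMap A K) ((∑ i, a i • m i) j)) d := by
    refine hd.of_coeff_eq_mul (IsLocalization.map_units K ⟨b, hb⟩).ne_zero fun d' hd' => ?_
    simp only [Finset.sum_apply, Pi.smul_apply, smul_eq_mul, map_sum, map_mul, Finset.mul_sum]
    refine Finset.sum_congr rfl fun i _ => ?_
    have hCb : ∀ β, degF β ≤ degF d.1 → coeff β (map (algebraMap A K) (a i)) =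
        coeff β (C (algebraMap A K b) * c i) := fun β hβ => by rw [ha i β hβ, coeff_C_mul]
    rw [coeff_mul_eq_of_coeff_eq hCb _ hd', mul_assoc, coeff_C_mul]
  rw [isExpOf_map_iff (IsFractionRing.injective A K)] at hFd
  exact ⟨_, Submodule.sum_mem _ fun i _ => M.smul_mem _ (hm i), hFd.ne_zero, hFd⟩

end ClearingDenominators

section ModuleSpan

open MvPowerSeries

variable {n p : ℕ} {A : Type} [CommRing A] [IsDomain A] {B : Subring (FractionRing A)}
  {M : Submodule (MvPowerSeries (Fin n) A) (Fin p → MvPowerSeries (Fin n) A)}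

lemma MemBxM.coeff_mem (hBA : ∀ a : A, algebraMap A (FractionRing A) a ∈ B)
    {G : Fin p → MvPowerSeries (Fin n) (FractionRing A)} (hG : MemBxM B M G)
    (d : Idx n p) : coeff d.1 (G d.2) ∈ B := by
  obtain ⟨k, c, m, hc, -, rfl⟩ := hG
  simp only [Finset.sum_apply, map_sum, coeff_mul]
  exact sum_mem fun i _ => sum_mem fun x _ => mul_mem (hc i x.1) (hBA _)

lemma MemBxM.sub {G H : Fin p → MvPowerSeries (Fin n) (FractionRing A)}
    (hG : MemBxM B M G) (hH : MemBxM B M H) : MemBxM B M (G - H) := by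
  obtain ⟨k, c, m, hc, hm, rfl⟩ := hG
  obtain ⟨k', c', m', hc', hm', rfl⟩ := hH
  refine ⟨k + k', Fin.append c (-c'), Fin.append m m', fun i α => ?_, fun i => ?_, ?_⟩
  · refine Fin.addCases (fun i => ?_) (fun i => ?_) i
    · simpa using hc i α
    · simpa using neg_mem (hc' i α)
  · refine Fin.addCases (fun i => ?_) (fun i => ?_) i
    · simpa using hm i
    · simpa using hm' i
  · ext1 j
    simp [Fin.sum_univ_add, sub_eq_add_neg, Finset.sum_apply]

variable {q : ℕ} {e : Fin q → Idx n p}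

lemma memBxM_iff_remainder_eq_zero (hdiag : diagramOf M = ⋃ i, Delta e i)
    {Φ : Fin q → Fin p → MvPowerSeries (Fin n) A} (hΦM : ∀ i, Φ i ∈ M)
    {G : Fin p → MvPowerSeries (Fin n) (FractionRing A)}
    {Q : Fin q → MvPowerSeries (Fin n) (FractionRing A)}
    {R : Fin p → MvPowerSeries (Fin n) (FractionRing A)} (hQB : ∀ i α, coeff α (Q i) ∈ B)
    (hGQR : ∀ j, G j = (∑ i, Q i * map (algebraMap A (FractionRing A)) (Φ i j)) + R j)
    (hR : suppV R ⊆ DeltaC e) :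
    MemBxM B M G ↔ R = 0 := by
  have hQΦ : MemBxM B M (∑ i, fun j => Q i * map (algebraMap A (FractionRing A)) (Φ i j)) :=
    ⟨q, Q, Φ, hQB, hΦM, rfl⟩
  have hRG : R = G - ∑ i, fun j => Q i * map (algebraMap A (FractionRing A)) (Φ i j) := by
    ext1 j
    simp [hGQR j, Finset.sum_apply]
  constructor
  · intro hG
    by_contra hR0
    obtain ⟨d, hd⟩ := exists_isExpOf hR0
    obtain ⟨k, c, m, -, hm, hsum⟩ := hRG ▸ hG.sub hQΦ
    have hdM := mem_diagramOf_of_isExpOf_sum hm (hsum ▸ hd)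
    exact hR hd.1 (hdiag ▸ hdM)
  · rintro rfl
    rw [eq_comm, sub_eq_zero] at hRG
    exact hRG ▸ hQΦ

end ModuleSpan

noncomputable section Division

open MvPowerSeries Finset

variable {n p q : ℕ} {K : Type} [Field K] (e : Fin q → Idx n p)
  (Φ : Fin q → Fin p → MvPowerSeries (Fin n) K)

/-- The quotients and the remainder are read off one coefficient function `c` on `Idx n p`: the
coefficient of `Qᵢ` at `β` is stored at `(αᵢ + β, jᵢ) ∈ Δᵢ`. -/
def divQuot (c : Idx n p → K) (i : Fin q) : MvPowerSeries (Fin n) K :=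
  fun β => if ((e i).1 + β, (e i).2) ∈ Delta e i then c ((e i).1 + β, (e i).2) else 0

def divRem (c : Idx n p → K) (j : Fin p) : MvPowerSeries (Fin n) K :=
  fun α => if (α, j) ∈ DeltaC e then c (α, j) else 0

def lowerSum (c : Idx n p → K) (d : Idx n p) : K :=
  ∑ i, ∑ x ∈ antidiagonal d.1, if idxLT ((e i).1 + x.1, (e i).2) d then
    coeff x.1 (divQuot e c i) * coeff x.2 (Φ i d.2) else 0

/-- The initial coefficient of the `Φ i` with `d ∈ Delta e i`, and `1` on `DeltaC e`; since these
sets partition `Idx n p`, exactly one summand is nonzero. -/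
def pivot (d : Idx n p) : K :=
  (∑ i, if d ∈ Delta e i then coeff (e i).1 (Φ i (e i).2) else 0) +
    if d ∈ DeltaC e then 1 else 0

def divCoeff (G : Fin p → MvPowerSeries (Fin n) K) : Idx n p → K :=
  idxLT_wf.fix fun d rec =>
    (coeff d.1 (G d.2) - lowerSum e Φ (fun d' => if h : idxLT d' d then rec d' h else 0) d) /
      pivot e Φ d

variable {e Φ}

lemma coeff_divQuot (c : Idx n p → K) (i : Fin q) (β : Fin n →₀ ℕ) :
    coeff β (divQuot e c i) =
      if ((e i).1 + β, (e i).2) ∈ Delta e i then c ((e i).1 + β, (e i).2) else 0 :=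
  rfl

lemma coeff_divRem (c : Idx n p → K) (d : Idx n p) :
    coeff d.1 (divRem e c d.2) = if d ∈ DeltaC e then c d else 0 :=
  rfl

lemma lowerSum_congr {c c' : Idx n p → K} {d : Idx n p}
    (h : ∀ d', idxLT d' d → c d' = c' d') : lowerSum e Φ c d = lowerSum e Φ c' d := by
  refine sum_congr rfl fun i _ => sum_congr rfl fun x _ => ?_
  split_ifs with hlt
  · rw [coeff_divQuot, coeff_divQuot, h _ hlt]
  · rfl

lemma divCoeff_eq (G : Fin p → MvPowerSeries (Fin n) K) (d : Idx n p) :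
    divCoeff e Φ G d =
      (coeff d.1 (G d.2) - lowerSum e Φ (divCoeff e Φ G) d) / pivot e Φ d := by
  rw [divCoeff, idxLT_wf.fix_eq]
  congr 2
  exact lowerSum_congr fun d' h => dif_pos h

lemma pivot_of_mem_Delta {d : Idx n p} {i : Fin q} (hd : d ∈ Delta e i) :
    pivot e Φ d = coeff (e i).1 (Φ i (e i).2) := by
  have hC : d ∉ DeltaC e := fun h => h (Set.mem_iUnion.mpr ⟨i, hd⟩)
  rw [pivot, if_neg hC, add_zero, sum_eq_single i, if_pos hd]
  · exact fun k _ hki => if_neg fun hk => hki (eq_of_mem_Delta hk hd)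
  · exact fun hi => absurd (mem_univ i) hi

lemma pivot_of_mem_DeltaC {d : Idx n p} (hd : d ∈ DeltaC e) : pivot e Φ d = 1 := by
  rw [pivot, if_pos hd, sum_eq_zero, zero_add]
  exact fun i _ => if_neg fun h => hd (Set.mem_iUnion.mpr ⟨i, h⟩)

lemma pivot_eq_one_or (d : Idx n p) :
    pivot e Φ d = 1 ∨ ∃ i, pivot e Φ d = coeff (e i).1 (Φ i (e i).2) := by
  by_cases hd : d ∈ DeltaC e
  · exact Or.inl (pivot_of_mem_DeltaC hd)
  · obtain ⟨i, hi⟩ := Set.mem_iUnion.mp (not_not.mp hd)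
    exact Or.inr ⟨i, pivot_of_mem_Delta hi⟩

lemma pivot_ne_zero (hΦe : ∀ i, IsExpOf (Φ i) (e i)) (d : Idx n p) : pivot e Φ d ≠ 0 := by
  rcases pivot_eq_one_or (e := e) (Φ := Φ) d with h | ⟨i, h⟩ <;> rw [h]
  exacts [one_ne_zero, (hΦe i).1]

lemma coeff_divQuot_mul (c : Idx n p → K) {i : Fin q} (hΦe : IsExpOf (Φ i) (e i))
    (d : Idx n p) :
    coeff d.1 (divQuot e c i * Φ i d.2) =
      (∑ x ∈ antidiagonal d.1, if idxLT ((e i).1 + x.1, (e i).2) d then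
        coeff x.1 (divQuot e c i) * coeff x.2 (Φ i d.2) else 0) +
      if d ∈ Delta e i then c d * coeff (e i).1 (Φ i (e i).2) else 0 := by
  rw [coeff_mul, ← sum_filter_add_sum_filter_not _ (fun x => idxLT ((e i).1 + x.1, (e i).2) d),
    sum_filter]
  congr 1
  split_ifs with hd
  · obtain ⟨hd2, β, hβ⟩ := Delta_subset_DeltaFull e i hd
    have hβd : ((e i).1 + β, (e i).2) = d := Prod.ext hβ.symm hd2.symm
    have hmem : (β, (e i).1) ∈ antidiagonal d.1 := mem_antidiagonal.mpr (by rw [hβ, add_comm])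
    rw [sum_eq_single_of_mem (β, (e i).1)
      (mem_filter.mpr ⟨hmem, by rw [hβd]; exact not_idxLT_iff.mpr (Or.inr rfl)⟩)]
    · rw [coeff_divQuot, hβd, if_pos hd, hd2]
    · intro x hx hne
      obtain ⟨hx, hlt⟩ := mem_filter.mp hx
      by_contra hx0
      have hslot := hΦe.add_eq_of_not_idxLT hx (right_ne_zero_of_mul hx0) hlt
      have hx1 : x.1 = β := add_left_cancel ((congrArg Prod.fst hslot).trans hβ)
      have hsum := mem_antidiagonal.mp hx
      rw [hx1, hβ] at hsum
      exact hne (Prod.ext hx1 (add_left_cancel (hsum.trans (add_comm _ _))))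
  · refine sum_eq_zero fun x hx => ?_
    obtain ⟨hx, hlt⟩ := mem_filter.mp hx
    by_contra hx0
    have hQ := left_ne_zero_of_mul hx0
    rw [coeff_divQuot, hΦe.add_eq_of_not_idxLT hx (right_ne_zero_of_mul hx0) hlt, if_neg hd] at hQ
    exact hQ rfl

lemma coeff_sum_divQuot_mul_add_divRem (hΦe : ∀ i, IsExpOf (Φ i) (e i)) (c : Idx n p → K)
    (d : Idx n p) :
    coeff d.1 ((∑ i, divQuot e c i * Φ i d.2) + divRem e c d.2) =
      lowerSum e Φ c d + c d * pivot e Φ d := by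
  simp only [map_add, map_sum, coeff_divQuot_mul c (hΦe _), sum_add_distrib, coeff_divRem,
    lowerSum, pivot, mul_add, mul_sum, mul_ite, mul_one, mul_zero, add_assoc]

lemma eq_sum_divQuot_mul_add_divRem (hΦe : ∀ i, IsExpOf (Φ i) (e i))
    (G : Fin p → MvPowerSeries (Fin n) K) (j : Fin p) :
    G j = (∑ i, divQuot e (divCoeff e Φ G) i * Φ i j) + divRem e (divCoeff e Φ G) j := by
  ext α
  rw [coeff_sum_divQuot_mul_add_divRem (d := (α, j)) hΦe, divCoeff_eq,
    div_mul_cancel₀ _ (pivot_ne_zero hΦe _), add_sub_cancel]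

variable {B : Subring K}

lemma coeff_divQuot_mem {c : Idx n p → K} (hc : ∀ d, c d ∈ B) (i : Fin q)
    (β : Fin n →₀ ℕ) : coeff β (divQuot e c i) ∈ B := by
  rw [coeff_divQuot]
  split_ifs
  exacts [hc _, zero_mem B]

lemma lowerSum_mem (hΦB : ∀ i (d : Idx n p), coeff d.1 (Φ i d.2) ∈ B) {c : Idx n p → K}
    (hc : ∀ d, c d ∈ B) (d : Idx n p) : lowerSum e Φ c d ∈ B := by
  refine sum_mem fun i _ => sum_mem fun x _ => ?_
  split_ifs
  exacts [mul_mem (coeff_divQuot_mem hc i x.1) (hΦB i (x.2, d.2)), zero_mem B]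

lemma pivot_inv_mem (hinv : ∀ i, (coeff (e i).1 (Φ i (e i).2))⁻¹ ∈ B) (d : Idx n p) :
    (pivot e Φ d)⁻¹ ∈ B := by
  rcases pivot_eq_one_or (e := e) (Φ := Φ) d with h | ⟨i, h⟩ <;> rw [h]
  exacts [by simpa only [inv_one] using one_mem B, hinv i]

lemma divCoeff_mem (hΦB : ∀ i (d : Idx n p), coeff d.1 (Φ i d.2) ∈ B)
    (hinv : ∀ i, (coeff (e i).1 (Φ i (e i).2))⁻¹ ∈ B) {G : Fin p → MvPowerSeries (Fin n) K}
    (hGB : ∀ d : Idx n p, coeff d.1 (G d.2) ∈ B) (d : Idx n p) : divCoeff e Φ G d ∈ B := by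
  induction d using idxLT_wf.induction with
  | _ d ih =>
    set below := fun d' => if idxLT d' d then divCoeff e Φ G d' else 0
    have hbelow : ∀ d', below d' ∈ B := fun d' => by
      simp only [below]
      split_ifs with h
      exacts [ih d' h, zero_mem B]
    rw [divCoeff_eq, div_eq_mul_inv, ← lowerSum_congr (c := below) fun d' h => if_pos h]
    exact mul_mem (sub_mem (hGB d) (lowerSum_mem hΦB hbelow d)) (pivot_inv_mem hinv d)

theorem exists_division (hΦe : ∀ i, IsExpOf (Φ i) (e i))
    (hΦB : ∀ i (d : Idx n p), coeff d.1 (Φ i d.2) ∈ B)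
    (hinv : ∀ i, (coeff (e i).1 (Φ i (e i).2))⁻¹ ∈ B) {G : Fin p → MvPowerSeries (Fin n) K}
    (hGB : ∀ d : Idx n p, coeff d.1 (G d.2) ∈ B) :
    ∃ (Q : Fin q → MvPowerSeries (Fin n) K) (R : Fin p → MvPowerSeries (Fin n) K),
      (∀ i α, coeff α (Q i) ∈ B) ∧ (∀ j, G j = (∑ i, Q i * Φ i j) + R j) ∧
      (∀ i β, coeff β (Q i) ≠ 0 → ((e i).1 + β, (e i).2) ∈ Delta e i) ∧
      suppV R ⊆ DeltaC e :=
  ⟨divQuot e (divCoeff e Φ G), divRem e (divCoeff e Φ G),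
    coeff_divQuot_mem (divCoeff_mem hΦB hinv hGB), eq_sum_divQuot_mul_add_divRem hΦe G,
    fun _ _ hQ => of_not_not fun hΔ => hQ (if_neg hΔ),
    fun _ hR => of_not_not fun hΔ => hR (if_neg hΔ)⟩

end Division

theorem stmt4_general {n p q : ℕ} {A : Type} [CommRing A] [IsDomain A]
    (M : Submodule (MvPowerSeries (Fin n) A) (Fin p → MvPowerSeries (Fin n) A))
    (e : Fin q → Idx n p)
    (hevert : ∀ d : Idx n p, IsVertex (diagramOf M) d ↔ ∃ i, e i = d)
    (Φ : Fin q → (Fin p → MvPowerSeries (Fin n) A))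
    (hΦM : ∀ i, Φ i ∈ M) (hΦe : ∀ i, IsExpOf (Φ i) (e i))
    (B : Subring (FractionRing A))
    (hBA : ∀ a : A, algebraMap A (FractionRing A) a ∈ B)
    (hBinv : ∀ i, (algebraMap A (FractionRing A)
      (MvPowerSeries.coeff (e i).1 (Φ i (e i).2)))⁻¹ ∈ B) :
    -- (a) 𝒩(M) = Δ₁ ∪ ⋯ ∪ Δ_q
    diagramOf M = ⋃ i : Fin q, Delta e i ∧
    -- (b) Φ₁,…,Φ_q generate B⟦x⟧·M
    (∀ G : Fin p → MvPowerSeries (Fin n) (FractionRing A),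
      MemBxM B M G ↔
        ∃ Q : Fin q → MvPowerSeries (Fin n) (FractionRing A),
          (∀ i α, MvPowerSeries.coeff α (Q i) ∈ B) ∧
          G = ∑ i, fun j => Q i *
            MvPowerSeries.map (algebraMap A (FractionRing A)) (Φ i j)) ∧
    -- (c) G ∈ B⟦x⟧·M iff the remainder of the division of G by Φ₁,…,Φ_q vanishes
    (∀ (G : Fin p → MvPowerSeries (Fin n) (FractionRing A))
       (Q : Fin q → MvPowerSeries (Fin n) (FractionRing A))
       (R : Fin p → MvPowerSeries (Fin n) (FractionRing A)),
      (∀ d : Idx n p, MvPowerSeries.coeff d.1 (G d.2) ∈ B) →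
      (∀ i α, MvPowerSeries.coeff α (Q i) ∈ B) →
      (∀ d : Idx n p, MvPowerSeries.coeff d.1 (R d.2) ∈ B) →
      (∀ j, G j = (∑ i, Q i *
        MvPowerSeries.map (algebraMap A (FractionRing A)) (Φ i j)) + R j) →
      (∀ i, ∀ β : Fin n →₀ ℕ, MvPowerSeries.coeff β (Q i) ≠ 0 →
        ((e i).1 + β, (e i).2) ∈ Delta e i) →
      suppV R ⊆ DeltaC e →
      (MemBxM B M G ↔ R = 0)) := by
  have hdiag : diagramOf M = ⋃ i : Fin q, Delta e i :=
    eq_iUnion_Delta_of_isVertex_iff (setShift_diagramOf M) hevert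
  refine ⟨hdiag, fun G => ⟨fun hG => ?_, fun ⟨Q, hQB, hG⟩ => ⟨q, Q, Φ, hQB, hΦM, hG⟩⟩,
    fun G Q R _ hQB _ hGQR _ hR => memBxM_iff_remainder_eq_zero hdiag hΦM hQB hGQR hR⟩
  obtain ⟨Q, R, hQB, hGQR, -, hR⟩ := exists_division (B := B)
    (Φ := fun i j => MvPowerSeries.map (algebraMap A (FractionRing A)) (Φ i j))
    (fun i => (isExpOf_map_iff (IsFractionRing.injective A _)).mpr (hΦe i))
    (fun _ _ => hBA _) hBinv (hG.coeff_mem hBA)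
  have hR0 := (memBxM_iff_remainder_eq_zero hdiag hΦM hQB hGQR hR).mp hG
  refine ⟨Q, hQB, funext fun j => ?_⟩
  simp [hGQR j, hR0, Finset.sum_apply]

theorem stmt4 {n p q : ℕ} {A : Type} [CommRing A] [IsDomain A]
    (M : Submodule (MvPowerSeries (Fin n) A) (Fin p → MvPowerSeries (Fin n) A))
    (e : Fin q → Idx n p) (heinj : Function.Injective e)
    (hevert : ∀ d : Idx n p, IsVertex (diagramOf M) d ↔ ∃ i, e i = d)
    (Φ : Fin q → (Fin p → MvPowerSeries (Fin n) A))
    (hΦM : ∀ i, Φ i ∈ M) (hΦ0 : ∀ i, Φ i ≠ 0) (hΦe : ∀ i, IsExpOf (Φ i) (e i))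
    (B : Subring (FractionRing A))
    (hBA : ∀ a : A, algebraMap A (FractionRing A) a ∈ B)
    (hBinv : ∀ i, (algebraMap A (FractionRing A)
      (MvPowerSeries.coeff (e i).1 (Φ i (e i).2)))⁻¹ ∈ B) :
    -- (a) 𝒩(M) = Δ₁ ∪ ⋯ ∪ Δ_q
    diagramOf M = ⋃ i : Fin q, Delta e i ∧
    -- (b) Φ₁,…,Φ_q generate B⟦x⟧·M
    (∀ G : Fin p → MvPowerSeries (Fin n) (FractionRing A),
      MemBxM B M G ↔
        ∃ Q : Fin q → MvPowerSeries (Fin n) (FractionRing A),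
          (∀ i α, MvPowerSeries.coeff α (Q i) ∈ B) ∧
          G = ∑ i, fun j => Q i *
            MvPowerSeries.map (algebraMap A (FractionRing A)) (Φ i j)) ∧
    -- (c) G ∈ B⟦x⟧·M iff the remainder of the division of G by Φ₁,…,Φ_q vanishes
    (∀ (G : Fin p → MvPowerSeries (Fin n) (FractionRing A))
       (Q : Fin q → MvPowerSeries (Fin n) (FractionRing A))
       (R : Fin p → MvPowerSeries (Fin n) (FractionRing A)),
      (∀ d : Idx n p, MvPowerSeries.coeff d.1 (G d.2) ∈ B) →
      (∀ i α, MvPowerSeries.coeff α (Q i) ∈ B) →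
      (∀ d : Idx n p, MvPowerSeries.coeff d.1 (R d.2) ∈ B) →
      (∀ j, G j = (∑ i, Q i *
        MvPowerSeries.map (algebraMap A (FractionRing A)) (Φ i j)) + R j) →
      (∀ i, ∀ β : Fin n →₀ ℕ, MvPowerSeries.coeff β (Q i) ≠ 0 →
        ((e i).1 + β, (e i).2) ∈ Delta e i) →
      suppV R ⊆ DeltaC e →
      (MemBxM B M G ↔ R = 0)) :=
  stmt4_general M e hevert Φ hΦM hΦe B hBA hBinv
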